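/- Let F be a regular thin family of finite subsets of ℕ, M ∈ [ℕ]^∞ and l ∈ ℕ. Then for every finite partition Plm_l(F↾M) = P₁ ∪ … ∪ P_p of the set of plegma l-tuples in F↾M, there exist L ∈ [M]^∞ and 1 ≤ i₀ ≤ p such that Plm_l(F↾L) ⊆ P_{i₀}. -/

import Mathlib

open Set Filter

namespace HOSM

/-- `t` is an initial segment of the finite set `s` (w.r.t. the increasing enumerations). -/
def InitSeg (t s : Finset ℕ) : Prop :=
  t ⊆ s ∧ ∀ a ∈ s, ∀ b ∈ t, a ≤ b → a ∈ t

/-- `t` is a proper initial segment of `s`. -/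
def ProperInitSeg (t s : Finset ℕ) : Prop := InitSeg t s ∧ t ≠ s

/-- The initial-segment closure `F̂` of a family `F`. -/
def hat (F : Set (Finset ℕ)) : Set (Finset ℕ) := {t | ∃ s ∈ F, InitSeg t s}

/-- The restriction `F↾L = {s ∈ F : s ⊆ L}`. -/
def restrict (F : Set (Finset ℕ)) (L : Set ℕ) : Set (Finset ℕ) :=
  {s | s ∈ F ∧ (s : Set ℕ) ⊆ L}

/-- `F` is hereditary: it contains all subsets of its members. -/
def Hereditary (F : Set (Finset ℕ)) : Prop := ∀ s ∈ F, ∀ t ⊆ s, t ∈ F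

/-- `elt s k` is the `k`-th smallest element of `s` (0-indexed; junk value `0` out of range). -/
def elt (s : Finset ℕ) (k : ℕ) : ℕ := (s.sort (· ≤ ·)).getD k 0

/-- `F` is spreading. -/
def Spreading (F : Set (Finset ℕ)) : Prop :=
  ∀ s ∈ F, ∀ t : Finset ℕ, t.card = s.card → (∀ k < s.card, elt s k ≤ elt t k) → t ∈ F

/-- The characteristic function of a finite set, as an element of `{0,1}^ℕ`. -/
def chi (s : Finset ℕ) : ℕ → Bool := fun n => decide (n ∈ s)

/-- `F` is compact: the set of characteristic functions of its members is closed in `{0,1}^ℕ`. -/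
def CompactFam (F : Set (Finset ℕ)) : Prop := IsClosed (chi '' F)

/-- `F` is regular: compact, hereditary and spreading. -/
def RegularFam (F : Set (Finset ℕ)) : Prop := CompactFam F ∧ Hereditary F ∧ Spreading F

/-- `F` is thin: no member is a proper initial segment of another member. -/
def Thin (F : Set (Finset ℕ)) : Prop := ∀ s ∈ F, ∀ t ∈ F, ¬ ProperInitSeg t s

/-- `F` is regular thin: thin, and its closure `F̂` is regular. -/
def RegularThin (F : Set (Finset ℕ)) : Prop := Thin F ∧ RegularFam (hat F)

/-- The relation on finite sets: `extRel F t s` iff `t ∈ F̂` and `s` is a proper initial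
segment of `t`.  Rank with respect to it computes the order `o_{F̂}`. -/
def extRel (F : Set (Finset ℕ)) (t s : Finset ℕ) : Prop := t ∈ hat F ∧ ProperInitSeg s t

open scoped Classical in
/-- The order `o(F)` of a family: the ordinal rank of the tree `F̂` at `∅`
(junk value `0` if `F̂` is ill-founded). -/
noncomputable def famOrder (F : Set (Finset ℕ)) : Ordinal :=
  if h : Acc (extRel F) (∅ : Finset ℕ) then h.rank else 0

/-- `nth L k` is the `k`-th smallest element of the set `L` (0-indexed). -/
noncomputable def nth (L : Set ℕ) (k : ℕ) : ℕ := Nat.nth (· ∈ L) k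

/-- `L(s) = {L(k) : k ∈ s}` for a finite set `s`. -/
noncomputable def mapSet (L : Set ℕ) (s : Finset ℕ) : Finset ℕ := s.image (nth L)

/-- An `l`-tuple of nonempty finite subsets of `ℕ` is a plegma family. -/
def IsPlegma {l : ℕ} (s : Fin l → Finset ℕ) : Prop :=
  (∀ i, (s i).Nonempty) ∧
  (∀ i j : Fin l, i < j → ∀ k, k < (s i).card → k < (s j).card →
      elt (s i) k < elt (s j) k) ∧
  (∀ i j : Fin l, ∀ k, k < (s i).card → k + 1 < (s j).card →
      elt (s i) k < elt (s j) (k + 1))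

/-- A plegma pair. -/
def IsPlegmaPair (s t : Finset ℕ) : Prop := IsPlegma ![s, t]

/-- `Plm l G`: the set of plegma `l`-tuples with members in `G`. -/
def Plm (l : ℕ) (G : Set (Finset ℕ)) : Set (Fin l → Finset ℕ) :=
  {s | IsPlegma s ∧ ∀ i, s i ∈ G}

/-- `s` is an initial segment of the infinite set `N`. -/
def InitSegOfInf (s : Finset ℕ) (N : Set ℕ) : Prop :=
  (s : Set ℕ) ⊆ N ∧ ∀ a ∈ N, ∀ b ∈ s, a ≤ b → a ∈ s

/-- `F` is very large in `M`: every infinite subset of `M` has an initial segment in `F`. -/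
def VeryLarge (F : Set (Finset ℕ)) (M : Set ℕ) : Prop :=
  ∀ N : Set ℕ, N ⊆ M → N.Infinite → ∃ s ∈ F, InitSegOfInf s N

/-- `F↾↾L`. -/
def restrict2 (F : Set (Finset ℕ)) (L : Set ℕ) : Set (Finset ℕ) :=
  {s | s ∈ restrict F L ∧ ∀ j, j + 1 < s.card → ∃ l ∈ L, elt s j < l ∧ l < elt s (j + 1)}

/-- `φ` is plegma preserving on `D`. -/
def PlegmaPreserving (D : Set (Finset ℕ)) (φ : Finset ℕ → Finset ℕ) : Prop :=
  ∀ s₁ ∈ D, ∀ s₂ ∈ D, IsPlegmaPair s₁ s₂ → IsPlegmaPair (φ s₁) (φ s₂)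

end HOSM

open HOSM

/-!
Code an `l`-tuple by one finite set: `t` codes `s` when, for every `i < l`, the elements of `t`
at positions `≡ i (mod l)` begin with `s i ∈ F`. Since `F` is thin, two members of `F` that are
initial segments of the same set coincide, so along a fixed infinite set the coded tuple is unique.

A first application of the Nash-Williams theorem gives `L₀ ⊆ M` that either contains no member
of `F` (then there are no plegma tuples to colour) or in which `F` is very large. In the latter
case, reading `F` along the `l` columns of an infinite `N ⊆ L₀` gives an initial segment of `N`
coding a plegma tuple, so the codes of the `p` colour classes together form a very large family,
and Nash-Williams again makes one class `j` very large in some `L₁ ⊆ L₀`. Let `L` consist of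
every `l`-th element of `L₁`. A plegma tuple from `L`, read in interleaved order, is increasing
with gaps of at most `l` positions, so it can be padded with elements of `L₁` into an infinite
`N ⊆ L₁` whose columns begin with the members of the tuple. Some initial segment of `N` codes a
tuple of colour `j`, and by uniqueness that tuple is the given one.

The Nash-Williams theorem is proved by Galvin–Prikry combinatorial forcing.
-/

namespace HOSM

section Enumeration

variable {s t : Finset ℕ} {f : ℕ → ℕ} {k c : ℕ}

theorem elt_eq_orderEmbOfFin (h : s.card = c) (hk : k < c) :
    elt s k = s.orderEmbOfFin h ⟨k, hk⟩ := by
  simp [elt, Finset.orderEmbOfFin_apply, h, hk]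

theorem elt_mem (hk : k < s.card) : elt s k ∈ s := by
  rw [elt_eq_orderEmbOfFin rfl hk]
  exact s.orderEmbOfFin_mem rfl _

theorem elt_lt_elt {k' : ℕ} (hkk' : k < k') (hk' : k' < s.card) : elt s k < elt s k' := by
  rw [elt_eq_orderEmbOfFin rfl (hkk'.trans hk'), elt_eq_orderEmbOfFin rfl hk']
  exact (s.orderEmbOfFin rfl).strictMono hkk'

theorem image_elt_range (s : Finset ℕ) : (Finset.range s.card).image (elt s) = s := by
  refine Finset.eq_of_subset_of_card_le (fun x hx => ?_) ?_
  · obtain ⟨k, hk, rfl⟩ := Finset.mem_image.1 hx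
    exact elt_mem (Finset.mem_range.1 hk)
  · rw [Finset.card_image_of_injOn, Finset.card_range]
    intro a ha b hb hab
    rw [Finset.coe_range, Set.mem_Iio] at ha hb
    rcases lt_trichotomy a b with h | h | h
    · exact absurd hab (elt_lt_elt h hb).ne
    · exact h
    · exact absurd hab (elt_lt_elt h ha).ne'

theorem card_image_range (hf : StrictMono f) (c : ℕ) :
    ((Finset.range c).image f).card = c := by
  rw [Finset.card_image_of_injective _ hf.injective, Finset.card_range]

theorem elt_image_range (hf : StrictMono f) (hk : k < c) :
    elt ((Finset.range c).image f) k = f k := by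
  have hmem : ∀ i : Fin c, f i ∈ (Finset.range c).image f :=
    fun i => Finset.mem_image_of_mem f (Finset.mem_range.2 i.2)
  rw [elt_eq_orderEmbOfFin (card_image_range hf c) hk,
    ← Finset.orderEmbOfFin_unique _ hmem (hf.comp Fin.val_strictMono)]

end Enumeration

section InitialSegments

variable {s t : Finset ℕ} {X Y : Set ℕ}

theorem InitSegOfInf.subset_or_subset (hs : InitSegOfInf s X) (ht : InitSegOfInf t X) :
    s ⊆ t ∨ t ⊆ s := by
  by_contra! h
  obtain ⟨a, has, hat⟩ := Finset.not_subset.1 h.1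
  obtain ⟨b, hbt, hbs⟩ := Finset.not_subset.1 h.2
  rcases le_total a b with hab | hba
  · exact hat (ht.2 a (hs.1 has) b hbt hab)
  · exact hbs (hs.2 b (ht.1 hbt) a has hba)

theorem InitSegOfInf.eq_of_card_eq (hs : InitSegOfInf s X) (ht : InitSegOfInf t X)
    (hst : s.card = t.card) : s = t :=
  (hs.subset_or_subset ht).elim (fun h => Finset.eq_of_subset_of_card_le h hst.ge)
    fun h => (Finset.eq_of_subset_of_card_le h hst.le).symm

theorem InitSegOfInf.eq_of_thin {F : Set (Finset ℕ)} (hF : Thin F) (hsF : s ∈ F) (htF : t ∈ F)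
    (hs : InitSegOfInf s X) (ht : InitSegOfInf t X) : s = t := by
  wlog hst : s ⊆ t generalizing s t
  · exact (this htF hsF ht hs ((hs.subset_or_subset ht).resolve_left hst)).symm
  by_contra hne
  exact hF t htF s hsF ⟨⟨hst, fun a ha b hb hab => hs.2 a (ht.1 ha) b hb hab⟩, hne⟩

theorem initSegOfInf_inter_iff (hYX : Y ⊆ X) (ht : InitSegOfInf t X) :
    InitSegOfInf s (Y ∩ t) ↔ InitSegOfInf s Y ∧ (s : Set ℕ) ⊆ t := by
  refine ⟨fun hs => ⟨⟨hs.1.trans inter_subset_left, fun a ha b hb hab => ?_⟩,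
    hs.1.trans inter_subset_right⟩,
    fun hs => ⟨subset_inter hs.1.1 hs.2, fun a ha => hs.1.2 a ha.1⟩⟩
  exact hs.2 a ⟨ha, ht.2 a (hYX ha) b (hs.1 hb).2 hab⟩ b hb hab

variable {f : ℕ → ℕ}

theorem initSegOfInf_image_range (hf : StrictMono f) (c : ℕ) :
    InitSegOfInf ((Finset.range c).image f) (range f) := by
  refine ⟨fun x hx => ?_, ?_⟩
  · obtain ⟨k, -, rfl⟩ := Finset.mem_image.1 hx
    exact mem_range_self k
  · rintro _ ⟨k, rfl⟩ b hb hkb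
    obtain ⟨k', hk', rfl⟩ := Finset.mem_image.1 hb
    exact Finset.mem_image_of_mem f
      (Finset.mem_range.2 ((hf.le_iff_le.1 hkb).trans_lt (Finset.mem_range.1 hk')))

theorem InitSegOfInf.eq_image_range (hf : StrictMono f) (ht : InitSegOfInf t (range f)) :
    t = (Finset.range t.card).image f :=
  ht.eq_of_card_eq (initSegOfInf_image_range hf _) (card_image_range hf _).symm

end InitialSegments

section NashWilliams

variable {G : Set (Finset ℕ)} {L L' M : Set ℕ} {a : Finset ℕ}

def tailAbove (L : Set ℕ) (a : Finset ℕ) : Set ℕ := {x ∈ L | ∀ y ∈ a, y < x}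

theorem tailAbove_subset : tailAbove L a ⊆ L := fun _ hx => hx.1

theorem tailAbove_mono (h : L' ⊆ L) : tailAbove L' a ⊆ tailAbove L a :=
  fun _ hx => ⟨h hx.1, hx.2⟩

theorem infinite_tailAbove (hL : L.Infinite) : (tailAbove L a).Infinite := by
  refine (hL.sdiff (finite_Iic (a.sup id))).mono fun x hx => ⟨hx.1, fun y hy => ?_⟩
  exact (Finset.le_sup (f := id) hy).trans_lt (not_le.1 hx.2)

theorem InitSegOfInf.insert_sInf {N : Set ℕ} {t : Finset ℕ} (hN : N.Nonempty)
    (ht : InitSegOfInf t (tailAbove N {sInf N})) : InitSegOfInf (insert (sInf N) t) N := by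
  refine ⟨?_, fun x hx b hb hxb => ?_⟩
  · rw [Finset.coe_insert]
    exact insert_subset (Nat.sInf_mem hN) (ht.1.trans tailAbove_subset)
  · rcases (Nat.sInf_le hx).eq_or_lt with h | h
    · exact h ▸ Finset.mem_insert_self _ _
    · rcases Finset.mem_insert.1 hb with rfl | hb
      · exact absurd hxb (not_le.2 h)
      · exact Finset.mem_insert_of_mem (ht.2 x ⟨hx, by simpa using h⟩ b hb hxb)

/-- Acceptance and rejection of the Galvin–Prikry combinatorial forcing. -/
def Accepts (G : Set (Finset ℕ)) (L : Set ℕ) (a : Finset ℕ) : Prop :=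
  ∀ N ⊆ tailAbove L a, N.Infinite → ∃ t, InitSegOfInf t N ∧ a ∪ t ∈ G

def Rejects (G : Set (Finset ℕ)) (L : Set ℕ) (a : Finset ℕ) : Prop :=
  ∀ L' ⊆ L, L'.Infinite → ¬ Accepts G L' a

theorem Accepts.mono (h : Accepts G L a) (hL : L' ⊆ L) : Accepts G L' a :=
  fun N hN => h N (hN.trans (tailAbove_mono hL))

theorem Rejects.mono (h : Rejects G L a) (hL : L' ⊆ L) : Rejects G L' a :=
  fun L'' hL'' => h L'' (hL''.trans hL)

theorem not_rejects_of_mem (ha : a ∈ G) (hL : L.Infinite) : ¬ Rejects G L a :=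
  fun h => h L subset_rfl hL fun _ _ _ => ⟨∅, ⟨by simp, by simp⟩, by simpa using ha⟩

theorem exists_accepts_or_rejects (hL : L.Infinite) (a : Finset ℕ) :
    ∃ L' ⊆ L, L'.Infinite ∧ (Accepts G L' a ∨ Rejects G L' a) := by
  by_cases h : Rejects G L a
  · exact ⟨L, subset_rfl, hL, Or.inr h⟩
  · simp only [Rejects, not_forall, not_not] at h
    obtain ⟨L', hL', hinf, hacc⟩ := h
    exact ⟨L', hL', hinf, Or.inl hacc⟩

theorem accepts_or_rejects_of_tailAbove
    (h : Accepts G (tailAbove L a) a ∨ Rejects G (tailAbove L a) a) :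
    Accepts G L a ∨ Rejects G L a := by
  refine h.imp (fun hacc N hN => hacc N fun x hx => ⟨hN hx, (hN hx).2⟩)
    fun hrej L' hL' hinf hacc => ?_
  exact hrej _ (tailAbove_mono hL') (infinite_tailAbove hinf) (hacc.mono tailAbove_subset)

section Diagonal

variable {D : Finset ℕ → Set ℕ → Prop}

theorem exists_forall_mem_finset (hmono : ∀ a L L', L' ⊆ L → D a L → D a L')
    (hex : ∀ a L, L.Infinite → ∃ L' ⊆ L, L'.Infinite ∧ D a L')
    (A : Finset (Finset ℕ)) (hL : L.Infinite) :
    ∃ L' ⊆ L, L'.Infinite ∧ ∀ a ∈ A, D a L' := by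
  classical
  induction A using Finset.induction_on generalizing L with
  | empty => exact ⟨L, subset_rfl, hL, by simp⟩
  | insert a A _ ih =>
    obtain ⟨L₁, hL₁L, hL₁, ha⟩ := hex a L hL
    obtain ⟨L₂, hL₂L₁, hL₂, hA⟩ := ih hL₁
    refine ⟨L₂, hL₂L₁.trans hL₁L, hL₂, fun b hb => ?_⟩
    rcases Finset.mem_insert.1 hb with rfl | hb
    · exact hmono _ _ _ hL₂L₁ ha
    · exact hA b hb

theorem exists_fusion_seq (hmono : ∀ a L L', L' ⊆ L → D a L → D a L')
    (hex : ∀ a L, L.Infinite → ∃ L' ⊆ L, L'.Infinite ∧ D a L')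
    (hM : M.Infinite) :
    ∃ Ls : ℕ → Set ℕ, Ls 0 = M ∧ ∀ n, (Ls n).Infinite ∧
      Ls (n + 1) ⊆ Ls n \ Iic (sInf (Ls n)) ∧
      ∀ a ⊆ Finset.range (sInf (Ls n) + 1), D a (Ls (n + 1)) := by
  have hstep (L : {L : Set ℕ // L.Infinite}) : ∃ L' : {L : Set ℕ // L.Infinite},
      L'.1 ⊆ L.1 \ Iic (sInf L.1) ∧ ∀ a ⊆ Finset.range (sInf L.1 + 1), D a L'.1 := by
    obtain ⟨L', hL'L, hL', hD⟩ := exists_forall_mem_finset hmono hex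
      (Finset.range (sInf L.1 + 1)).powerset (L.2.sdiff (finite_Iic _))
    exact ⟨⟨L', hL'⟩, hL'L, fun a ha => hD a (Finset.mem_powerset.2 ha)⟩
  choose step hsub hD using hstep
  refine ⟨fun n => (step^[n] ⟨M, hM⟩).1, rfl, fun n =>
    ⟨(step^[n] ⟨M, hM⟩).2, ?_, ?_⟩⟩
  · simpa only [Function.iterate_succ_apply'] using hsub _
  · simpa only [Function.iterate_succ_apply'] using hD _

theorem exists_forall_finset_tailAbove (hmono : ∀ a L L', L' ⊆ L → D a L → D a L')
    (hex : ∀ a L, L.Infinite → ∃ L' ⊆ L, L'.Infinite ∧ D a L')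
    (hM : M.Infinite) :
    ∃ L ⊆ M, L.Infinite ∧ ∀ a : Finset ℕ, ↑a ⊆ L → D a (tailAbove L a) := by
  obtain ⟨Ls, hM, hLs⟩ := exists_fusion_seq hmono hex hM
  set e := fun n => sInf (Ls n)
  have he_mem (n : ℕ) : e n ∈ Ls n := Nat.sInf_mem (hLs n).1.nonempty
  have hanti : Antitone Ls := antitone_nat_of_succ_le fun n => (hLs n).2.1.trans sdiff_subset
  have he : StrictMono e :=
    strictMono_nat_of_lt_succ fun n => not_le.1 ((hLs n).2.1 (he_mem (n + 1))).2
  have hkey (n : ℕ) : ∀ x ∈ range (fun k => e (k + 1)), e n < x → x ∈ Ls (n + 1) := by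
    rintro _ ⟨k, rfl⟩ hk
    exact hanti (Nat.succ_le_succ (Nat.lt_succ_iff.1 (he.lt_iff_lt.1 hk))) (he_mem _)
  -- Dropping `e 0` puts the whole diagonal set inside `Ls 1`, which settles `a = ∅`.
  refine ⟨range fun k => e (k + 1), ?_, infinite_range_of_injective
    (he.comp (strictMono_id.add_const 1)).injective, fun a ha => ?_⟩
  · rintro _ ⟨n, rfl⟩
    exact hM ▸ hanti (Nat.zero_le _) (he_mem _)
  obtain ⟨n, han, hna⟩ : ∃ n, (∀ y ∈ a, y ≤ e n) ∧
      ∀ x ∈ tailAbove (range fun k => e (k + 1)) a, e n < x := by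
    rcases a.eq_empty_or_nonempty with rfl | hne
    · exact ⟨0, by simp, fun _ ⟨⟨k, hk⟩, _⟩ => hk ▸ he (Nat.succ_pos k)⟩
    · obtain ⟨m, hm⟩ := ha (a.max'_mem hne)
      replace hm : e (m + 1) = a.max' hne := hm
      exact ⟨m + 1, fun y hy => hm ▸ a.le_max' y hy,
        fun x hx => hm ▸ hx.2 _ (a.max'_mem hne)⟩
  refine hmono _ _ _ (fun x hx => hkey n x hx.1 (hna x hx)) ((hLs n).2.2 a fun y hy => ?_)
  exact Finset.mem_range.2 (Nat.lt_succ_of_le (han y hy))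

end Diagonal

theorem exists_accepts_or_rejects_all (G : Set (Finset ℕ)) (hM : M.Infinite) :
    ∃ L ⊆ M, L.Infinite ∧ ∀ a : Finset ℕ, ↑a ⊆ L →
      Accepts G L a ∨ Rejects G L a := by
  obtain ⟨L, hLM, hL, h⟩ := exists_forall_finset_tailAbove
    (D := fun a L => Accepts G L a ∨ Rejects G L a)
    (fun _ _ _ hL' h => h.imp (·.mono hL') (·.mono hL'))
    (fun a _ hL => exists_accepts_or_rejects hL a) hM
  exact ⟨L, hLM, hL, fun a ha => accepts_or_rejects_of_tailAbove (h a ha)⟩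

theorem eventually_rejects_insert
    (hdec : ∀ a : Finset ℕ, ↑a ⊆ L → Accepts G L a ∨ Rejects G L a) (ha : ↑a ⊆ L)
    (hrej : Rejects G L a) : ∀ᶠ x in atTop, x ∈ L → Rejects G L (insert x a) := by
  set S := {x ∈ tailAbove L a | ¬ Rejects G L (insert x a)}
  suffices hS : S.Finite by
    filter_upwards [Nat.cofinite_eq_atTop ▸ hS.eventually_cofinite_notMem,
      eventually_gt_atTop (a.sup id)] with x hxS hx hxL
    by_contra h
    exact hxS ⟨⟨hxL, fun y hy => (Finset.le_sup (f := id) hy).trans_lt hx⟩, h⟩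
  by_contra hS
  refine hrej S (fun x hx => hx.1.1) hS fun N hN hNinf => ?_
  have hnS : sInf N ∈ S := (hN (Nat.sInf_mem hNinf.nonempty)).1
  have hacc : Accepts G L (insert (sInf N) a) := by
    refine (hdec _ ?_).resolve_right hnS.2
    rw [Finset.coe_insert]
    exact insert_subset hnS.1.1 ha
  have hsub : tailAbove N {sInf N} ⊆ tailAbove L (insert (sInf N) a) := by
    rintro x ⟨hxN, hx⟩
    refine ⟨(hN hxN).1.1.1, fun y hy => ?_⟩
    rcases Finset.mem_insert.1 hy with rfl | hy
    · exact hx _ (Finset.mem_singleton_self _)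
    · exact (hN hxN).2 y hy
  obtain ⟨t, ht, htG⟩ := hacc _ hsub (infinite_tailAbove hNinf)
  refine ⟨insert (sInf N) t, ht.insert_sInf hNinf.nonempty, ?_⟩
  rwa [Finset.union_insert, ← Finset.insert_union]

theorem exists_insert_forall_subset {P : Finset ℕ → Prop} (hL : L.Infinite)
    (hstep : ∀ a : Finset ℕ,
       ↑a ⊆ L → P a → ∀ᶠ x in atTop, x ∈ L → P (insert x a))
    {E : Finset ℕ} (hEL : ↑E ⊆ L) (hE : ∀ b ⊆ E, P b) :
    ∃ x ∈ L, x ∉ E ∧ ∀ b ⊆ insert x E, P b := by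
  have hP : ∀ᶠ x in atTop, ∀ b ∈ E.powerset, x ∈ L → P (insert x b) :=
    (eventually_all_finset _).2 fun b hb =>
      hstep b ((Finset.coe_subset.2 (Finset.mem_powerset.1 hb)).trans hEL)
        (hE b (Finset.mem_powerset.1 hb))
  obtain ⟨x, hxL, hxE, hxP⟩ := ((Nat.frequently_atTop_iff_infinite.2 hL).and_eventually
    ((eventually_gt_atTop (E.sup id)).and hP)).exists
  refine ⟨x, hxL, fun h => (Finset.le_sup (f := id) h).not_gt hxE, fun b hb => ?_⟩
  by_cases hxb : x ∈ b
  · rw [← Finset.insert_erase hxb]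
    exact hxP _ (Finset.mem_powerset.2 (Finset.subset_insert_iff.1 hb)) hxL
  · exact hE b ((Finset.subset_insert_iff_of_notMem hxb).1 hb)

theorem exists_forall_finset_subset {P : Finset ℕ → Prop} (hL : L.Infinite) (h0 : P ∅)
    (hstep : ∀ a : Finset ℕ,
      ↑a ⊆ L → P a → ∀ᶠ x in atTop, x ∈ L → P (insert x a)) :
    ∃ L' ⊆ L, L'.Infinite ∧ ∀ a : Finset ℕ, ↑a ⊆ L' → P a := by
  let S := {E : Finset ℕ // ↑E ⊆ L ∧ ∀ b ⊆ E, P b}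
  choose x hxL hxE hxP using fun E : S => exists_insert_forall_subset hL hstep E.2.1 E.2.2
  let next (E : S) : S := ⟨insert (x E) E.1, by
    rw [Finset.coe_insert]
    exact insert_subset (hxL E) E.2.1, hxP E⟩
  let Es (n : ℕ) : S := next^[n] ⟨∅, by simp, fun b hb => Finset.subset_empty.1 hb ▸ h0⟩
  have hsucc (n : ℕ) : (Es (n + 1)).1 = insert (x (Es n)) (Es n).1 := by
    simp only [Es, Function.iterate_succ_apply']
    rfl
  have hcard (n : ℕ) : (Es n).1.card = n := by
    induction n with
    | zero => rfl
    | succ n ih => rw [hsucc, Finset.card_insert_of_notMem (hxE _), ih]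
  have hmono : Monotone fun n => ((Es n).1 : Set ℕ) := monotone_nat_of_le_succ fun n => by
    rw [hsucc, Finset.coe_insert]
    exact subset_insert _ _
  refine ⟨⋃ n, ((Es n).1 : Set ℕ), iUnion_subset fun n => (Es n).2.1, fun hfin => ?_,
    fun a ha => ?_⟩
  · have := Finset.card_le_card (s := (Es (hfin.toFinset.card + 1)).1) fun y hy =>
      hfin.mem_toFinset.2 (mem_iUnion.2 ⟨_, hy⟩)
    rw [hcard] at this
    omega
  · obtain ⟨n, hn⟩ := hmono.directed_le.exists_mem_subset_of_finset_subset_biUnion ha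
    exact (Es n).2.2 a (Finset.coe_subset.1 hn)

theorem exists_veryLarge_or_forall_not_subset (G : Set (Finset ℕ)) (hM : M.Infinite) :
    ∃ L ⊆ M, L.Infinite ∧ (VeryLarge G L ∨ ∀ t ∈ G, ¬ (t : Set ℕ) ⊆ L) := by
  obtain ⟨L, hLM, hL, hdec⟩ := exists_accepts_or_rejects_all G hM
  rcases hdec ∅ (by simp) with hacc | hrej
  · refine ⟨L, hLM, hL, Or.inl fun N hN hNinf => ?_⟩
    obtain ⟨t, ht, htG⟩ := hacc N (fun x hx => ⟨hN hx, by simp⟩) hNinf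
    exact ⟨t, by simpa using htG, ht⟩
  · obtain ⟨L', hL'L, hL', hrej'⟩ :=
      exists_forall_finset_subset hL hrej fun a ha => eventually_rejects_insert hdec ha
    exact ⟨L', hL'L.trans hLM, hL', Or.inr fun t ht htL =>
      not_rejects_of_mem ht hL (hrej' t htL)⟩

end NashWilliams

section Partition

variable {G H : Set (Finset ℕ)} {L : Set ℕ}

theorem VeryLarge.mono (h : VeryLarge G L) (hG : G ⊆ H) : VeryLarge H L :=
  fun N hN hNinf => (h N hN hNinf).imp fun _ ht => ⟨hG ht.1, ht.2⟩

theorem VeryLarge.exists_union (h : VeryLarge (G ∪ H) L) (hL : L.Infinite) :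
    ∃ L' ⊆ L, L'.Infinite ∧ (VeryLarge G L' ∨ VeryLarge H L') := by
  obtain ⟨L', hL'L, hL', hG | hG⟩ := exists_veryLarge_or_forall_not_subset G hL
  · exact ⟨L', hL'L, hL', Or.inl hG⟩
  refine ⟨L', hL'L, hL', Or.inr fun N hN hNinf => ?_⟩
  obtain ⟨t, ht | ht, htN⟩ := h N (hN.trans hL'L) hNinf
  · exact absurd (htN.1.trans hN) (hG t ht)
  · exact ⟨t, ht, htN⟩

theorem VeryLarge.exists_biUnion {ι : Type*} {G : ι → Set (Finset ℕ)} {S : Finset ι}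
    (h : VeryLarge (⋃ j ∈ S, G j) L) (hL : L.Infinite) :
    ∃ L' ⊆ L, L'.Infinite ∧ ∃ j ∈ S, VeryLarge (G j) L' := by
  classical
  induction S using Finset.induction_on generalizing L with
  | empty =>
    obtain ⟨t, ht, -⟩ := h L subset_rfl hL
    simp at ht
  | insert j S _ ih =>
    rw [Finset.set_biUnion_insert] at h
    obtain ⟨L₁, hL₁L, hL₁, hj | hS⟩ := h.exists_union hL
    · exact ⟨L₁, hL₁L, hL₁, j, Finset.mem_insert_self _ _, hj⟩
    · obtain ⟨L₂, hL₂L₁, hL₂, j', hj', hj'G⟩ := ih hS hL₁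
      exact ⟨L₂, hL₂L₁.trans hL₁L, hL₂, j', Finset.mem_insert_of_mem hj', hj'G⟩

end Partition

section Columns

open Classical

/-- `Nat.count (· ∈ X) x` is the position of `x` in the increasing enumeration of `X`. -/
def column (l : ℕ) (X : Set ℕ) (i : ℕ) : Set ℕ := {x ∈ X | Nat.count (· ∈ X) x % l = i}

variable {l i : ℕ} {X : Set ℕ} {f : ℕ → ℕ}

theorem column_subset : column l X i ⊆ X := fun _ hx => hx.1

theorem count_mem_range_apply (hf : StrictMono f) (q : ℕ) :
    Nat.count (· ∈ range f) (f q) = q := by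
  conv_rhs => rw [← card_image_range hf q]
  rw [Nat.count_eq_card_filter_range]
  congr 1
  ext x
  simp only [Finset.mem_filter, Finset.mem_range, Finset.mem_image, mem_range]
  constructor
  · rintro ⟨hx, k, rfl⟩
    exact ⟨k, hf.lt_iff_lt.1 hx, rfl⟩
  · rintro ⟨k, hk, rfl⟩
    exact ⟨hf hk, k, rfl⟩

theorem column_range (hf : StrictMono f) (hi : i < l) :
    column l (range f) i = range (fun k => f (i + k * l)) := by
  ext x
  constructor
  · rintro ⟨⟨q, rfl⟩, hq⟩
    rw [count_mem_range_apply hf] at hq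
    exact ⟨q / l, by simp only [← hq, Nat.mod_add_div' q l]⟩
  · rintro ⟨k, rfl⟩
    refine ⟨mem_range_self _, ?_⟩
    simp only [count_mem_range_apply hf, Nat.add_mul_mod_self_right, Nat.mod_eq_of_lt hi]

theorem column_eq_inter {t : Finset ℕ} (ht : InitSegOfInf t X) :
    column l t i = column l X i ∩ t := by
  have hcount : ∀ x ∈ t, Nat.count (· ∈ (t : Set ℕ)) x = Nat.count (· ∈ X) x := by
    intro x hx
    simp only [Nat.count_eq_card_filter_range]
    congr 1
    refine Finset.filter_congr fun y hy => ⟨fun h => ht.1 h, fun h => ?_⟩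
    exact ht.2 y h x hx (Finset.mem_range.1 hy).le
  ext x
  simp only [column, mem_inter_iff, mem_ofPred_eq, Finset.mem_coe]
  constructor
  · rintro ⟨hx, h⟩
    exact ⟨⟨ht.1 hx, hcount x hx ▸ h⟩, hx⟩
  · rintro ⟨⟨-, h⟩, hx⟩
    exact ⟨hx, (hcount x hx).symm ▸ h⟩

theorem initSegOfInf_column_iff {s t : Finset ℕ} (ht : InitSegOfInf t X) :
    InitSegOfInf s (column l t i) ↔ InitSegOfInf s (column l X i) ∧ (s : Set ℕ) ⊆ t := by
  rw [column_eq_inter ht]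
  exact initSegOfInf_inter_iff column_subset ht

end Columns

section Plegma

variable {l : ℕ}

theorem strictMono_add_mul {f : ℕ → ℕ} (hf : StrictMono f) (hl : 0 < l) (i : ℕ) :
    StrictMono fun k => f (i + k * l) :=
  hf.comp fun _ _ hk => Nat.add_lt_add_left (Nat.mul_lt_mul_of_pos_right hk hl) i

theorem isPlegma_image_range {f : ℕ → ℕ} (hf : StrictMono f) {c : Fin l → ℕ}
    (hc : ∀ i, 0 < c i) :
    IsPlegma fun i : Fin l => (Finset.range (c i)).image fun k => f (i + k * l) := by
  have hcol (i : Fin l) := strictMono_add_mul hf i.pos i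
  refine ⟨fun i => ?_, fun i j hij k hki hkj => ?_, fun i j k hki hkj => ?_⟩
  · exact (Finset.nonempty_range_iff.2 (hc i).ne').image _
  all_goals
    rw [card_image_range (hcol _)] at hki hkj
    rw [elt_image_range (hcol _) hki, elt_image_range (hcol _) hkj]
    apply hf
  · exact Nat.add_lt_add_right hij _
  · rw [Nat.succ_mul]
    omega

theorem strictMono_extend_findGreatest {D : ℕ → Prop} [DecidablePred D] {φ : ℕ → ℕ} (h0 : D 0)
    (hgap : ∀ q, D (q + 1) → ∃ r ≤ q, D r ∧ q + 1 ≤ r + l)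
    (hφ : ∀ q r, D q → D r → q < r → φ q + l ≤ φ r) :
    StrictMono fun q => φ (Nat.findGreatest D q) + (q - Nat.findGreatest D q) := by
  refine strictMono_nat_of_lt_succ fun q => ?_
  have hr : D (Nat.findGreatest D q) := Nat.findGreatest_spec (Nat.zero_le q) h0
  have hrq : Nat.findGreatest D q ≤ q := Nat.findGreatest_le q
  by_cases hq : D (q + 1)
  · obtain ⟨r, hrq', hr', hgap'⟩ := hgap q hq
    have := Nat.le_findGreatest hrq' hr'
    have := hφ _ _ hr hq (by omega)
    simp only [Nat.findGreatest_eq hq, Nat.sub_self, add_zero]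
    omega
  · simp only [Nat.findGreatest_of_not hq]
    omega

open Fin.NatCast

variable [NeZero l] (s : Fin l → Finset ℕ)

def interleave (q : ℕ) : ℕ := elt (s q) (q / l)

def IsInterleavePos (q : ℕ) : Prop := q / l < (s q).card

variable {s}

theorem natCast_val_add_mul (i : Fin l) (k : ℕ) : (Nat.cast (i + k * l) : Fin l) = i := by
  ext
  rw [Fin.val_natCast, Nat.add_mul_mod_self_right, Nat.mod_eq_of_lt i.2]

theorem val_add_mul_div (i : Fin l) (k : ℕ) : ((i : ℕ) + k * l) / l = k := by
  rw [Nat.add_mul_div_right _ _ (NeZero.pos l), Nat.div_eq_of_lt i.2, zero_add]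

theorem interleave_add_mul (i : Fin l) (k : ℕ) : interleave s (i + k * l) = elt (s i) k := by
  rw [interleave, natCast_val_add_mul, val_add_mul_div]

theorem isInterleavePos_add_mul {i : Fin l} {k : ℕ} :
    IsInterleavePos s (i + k * l) ↔ k < (s i).card := by
  rw [IsInterleavePos, natCast_val_add_mul, val_add_mul_div]

theorem IsInterleavePos.of_add {q : ℕ} (h : IsInterleavePos s (q + l)) : IsInterleavePos s q := by
  have hcast : (Nat.cast (q + l) : Fin l) = q := by ext; simp [Fin.val_natCast]
  rw [IsInterleavePos, hcast, Nat.add_div_right _ (NeZero.pos l)] at h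
  exact (Nat.lt_succ_self _).trans h

theorem IsPlegma.isInterleavePos_of_lt (hs : IsPlegma s) {q : ℕ} (hq : q < l) :
    IsInterleavePos s q := by
  rw [IsInterleavePos, Nat.div_eq_of_lt hq]
  exact Finset.card_pos.2 (hs.1 _)

theorem IsPlegma.interleave_lt (hs : IsPlegma s) {q q' : ℕ} (hq : IsInterleavePos s q)
    (hq' : IsInterleavePos s q') (hqq' : q < q') : interleave s q < interleave s q' := by
  have hdiv : q / l ≤ q' / l := Nat.div_le_div_right hqq'.le
  have hmod := Nat.mod_add_div q l
  have hmod' := Nat.mod_add_div q' l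
  rcases hdiv.eq_or_lt with hk | hk
  · rw [interleave, interleave, ← hk]
    refine hs.2.1 _ _ ?_ _ hq (hk ▸ hq')
    rw [Fin.lt_def, Fin.val_natCast, Fin.val_natCast]
    rw [← hk] at hmod'
    omega
  · have hq'' : q / l + 1 < (s q').card := by unfold IsInterleavePos at hq'; omega
    calc interleave s q < elt (s q') (q / l + 1) := hs.2.2 _ _ _ hq hq''
      _ ≤ interleave s q' := by
        rcases (Nat.lt_iff_add_one_le.1 hk).eq_or_lt with h | h
        · rw [interleave, h]
        · exact (elt_lt_elt h hq').le

theorem IsPlegma.exists_strictMono_interleave (hs : IsPlegma s) {u : ℕ → ℕ}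
    (hu : StrictMono u)
    (hsu : ∀ i, (s i : Set ℕ) ⊆ range fun a => u (a * l)) :
    ∃ g : ℕ → ℕ, StrictMono g ∧ range g ⊆ range u ∧
      ∀ (i : Fin l) k, k < (s i).card → g (i + k * l) = elt (s i) k := by
  classical
  have hidx : ∀ q, ∃ a, IsInterleavePos s q → u (a * l) = interleave s q := by
    intro q
    by_cases hq : IsInterleavePos s q
    · obtain ⟨a, ha⟩ := hsu _ (elt_mem hq)
      exact ⟨a, fun _ => ha⟩
    · exact ⟨0, fun h => absurd h hq⟩
  choose a ha using hidx
  have hl : 0 < l := NeZero.pos l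
  have h0 := hs.isInterleavePos_of_lt hl
  have hgap (q : ℕ) (hq : IsInterleavePos s (q + 1)) :
      ∃ r ≤ q, IsInterleavePos s r ∧ q + 1 ≤ r + l := by
    by_cases hql : q + 1 < l
    · exact ⟨0, Nat.zero_le q, h0, by omega⟩
    · have : IsInterleavePos s (q + 1 - l + l) := by rwa [Nat.sub_add_cancel (by omega)]
      exact ⟨q + 1 - l, by omega, this.of_add, by omega⟩
  have hmono (q r : ℕ) (hq : IsInterleavePos s q) (hr : IsInterleavePos s r) (hqr : q < r) :
      a q * l + l ≤ a r * l := by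
    have : u (a q * l) < u (a r * l) := by
      rw [ha q hq, ha r hr]
      exact hs.interleave_lt hq hr hqr
    rw [← Nat.succ_mul]
    exact Nat.mul_le_mul_right l (Nat.lt_of_mul_lt_mul_right (hu.lt_iff_lt.1 this))
  refine ⟨u ∘ _, hu.comp (strictMono_extend_findGreatest h0 hgap hmono), range_comp_subset_range _ _,
    fun i k hk => ?_⟩
  have hpos := isInterleavePos_add_mul.2 hk
  simp only [Function.comp_apply, Nat.findGreatest_eq hpos, Nat.sub_self, add_zero, ha _ hpos,
    interleave_add_mul]

end Plegma

section Coding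

variable {l : ℕ} {F : Set (Finset ℕ)} {L : Set ℕ}

def Codes (l : ℕ) (F : Set (Finset ℕ)) (t : Finset ℕ) (s : Fin l → Finset ℕ) : Prop :=
  ∀ i : Fin l, s i ∈ F ∧ InitSegOfInf (s i) (column l t i)

theorem VeryLarge.codes (hl : 0 < l) (h0 : ∅ ∉ F) (hF : VeryLarge F L) :
    VeryLarge {t | ∃ s ∈ Plm l (restrict F L), Codes l F t s} L := by
  classical
  intro N hNL hN
  set f := Nat.nth (· ∈ N)
  have hf : StrictMono f := Nat.nth_strictMono hN
  have hrange : range f = N := Nat.range_nth_of_infinite hN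
  have hcol (i : Fin l) : column l N i = range fun k => f (i + k * l) := by
    rw [← column_range hf i.2, hrange]
  have hex (i : Fin l) : ∃ s ∈ F, InitSegOfInf s (column l N i) := by
    refine hF _ (column_subset.trans hNL) ?_
    rw [hcol]
    exact infinite_range_of_injective (strictMono_add_mul hf hl i).injective
  choose s hsF hs using hex
  have hs_eq : s = fun i => (Finset.range (s i).card).image fun k => f (i + k * l) := by
    funext i
    have := hs i
    rw [hcol] at this
    exact this.eq_image_range (strictMono_add_mul hf hl i)
  have hplegma : IsPlegma s := by
    rw [hs_eq]
    refine isPlegma_image_range hf fun i => Finset.card_pos.2 ?_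
    exact Finset.nonempty_iff_ne_empty.2 fun h => h0 (h ▸ hsF i)
  let m := Finset.univ.sup fun i => (s i).sup id
  let t := (Finset.range (m + 1)).filter (· ∈ N)
  have ht : InitSegOfInf t N := by
    refine ⟨fun x hx => (Finset.mem_filter.1 hx).2, fun a ha b hb hab => ?_⟩
    simp only [t, Finset.mem_filter, Finset.mem_range] at hb ⊢
    exact ⟨by omega, ha⟩
  have hst (i : Fin l) : (s i : Set ℕ) ⊆ t := by
    intro x hx
    simp only [t, Finset.coe_filter, Finset.mem_range, mem_ofPred_eq]
    refine ⟨Nat.lt_succ_of_le ?_, column_subset ((hs i).1 hx)⟩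
    exact (Finset.le_sup (f := id) hx).trans
      (Finset.le_sup (f := fun i => (s i).sup id) (Finset.mem_univ i))
  refine ⟨t, ⟨s, ⟨hplegma, fun i => ⟨hsF i, ?_⟩⟩, fun i => ⟨hsF i, ?_⟩⟩, ht⟩
  · exact (hs i).1.trans (column_subset.trans hNL)
  · exact (initSegOfInf_column_iff ht).2 ⟨hs i, hst i⟩

theorem VeryLarge.exists_plm_subset (hl : 0 < l) (hF : Thin F) {Q : Set (Fin l → Finset ℕ)}
    (hQ : VeryLarge {t | ∃ s ∈ Q, Codes l F t s} L) (hL : L.Infinite) :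
    ∃ L' ⊆ L, L'.Infinite ∧ Plm l (restrict F L') ⊆ Q := by
  have : NeZero l := ⟨hl.ne'⟩
  have hu : StrictMono (Nat.nth (· ∈ L)) := Nat.nth_strictMono hL
  have hrange : range (Nat.nth (· ∈ L)) = L := Nat.range_nth_of_infinite hL
  refine ⟨range fun a => Nat.nth (· ∈ L) (a * l),
    fun _ ⟨_, ha⟩ => ha ▸ hrange.subset ⟨_, rfl⟩,
    infinite_range_of_injective (hu.comp (strictMono_mul_right_of_pos hl)).injective, ?_⟩
  rintro s ⟨hs, hsF⟩
  obtain ⟨g, hg, hgu, hgs⟩ := hs.exists_strictMono_interleave hu fun i => (hsF i).2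
  obtain ⟨t, ⟨s', hs'Q, hs'⟩, ht⟩ :=
    hQ (range g) (hgu.trans hrange.subset) (infinite_range_of_injective hg.injective)
  suffices s' = s from this ▸ hs'Q
  funext i
  have hsi : InitSegOfInf (s i) (column l (range g) i) := by
    have : s i = (Finset.range (s i).card).image fun k => g (i + k * l) := by
      conv_lhs => rw [← image_elt_range (s i)]
      exact Finset.image_congr fun k hk => (hgs i k (Finset.mem_range.1 hk)).symm
    rw [column_range hg i.2, this]
    exact initSegOfInf_image_range (strictMono_add_mul hg hl i) _
  exact ((initSegOfInf_column_iff ht).1 (hs' i).2).1.eq_of_thin hF (hs' i).1 (hsF i).1 hsi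

end Coding

theorem plm_restrict_mono {l : ℕ} {F : Set (Finset ℕ)} {L M : Set ℕ} (h : L ⊆ M) :
    Plm l (restrict F L) ⊆ Plm l (restrict F M) :=
  fun _ hs => ⟨hs.1, fun i => ⟨(hs.2 i).1, (hs.2 i).2.trans h⟩⟩

theorem Thin.eq_empty_of_empty_mem {F : Set (Finset ℕ)} (hF : Thin F) (h0 : ∅ ∈ F)
    {s : Finset ℕ} (hs : s ∈ F) : s = ∅ := by
  by_contra hne
  refine hF s hs ∅ h0 ⟨⟨Finset.empty_subset s, fun _ _ _ hb => ?_⟩, Ne.symm hne⟩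
  exact absurd hb (Finset.notMem_empty _)

end HOSM

/-- (Ramsey property of plegma families.) If `F` is regular thin,
`M` is infinite and `Plm_l(F↾M) = P₁ ∪ … ∪ P_p`, then there are an infinite `L ⊆ M` and `i₀`
with `Plm_l(F↾L) ⊆ P_{i₀}`. -/
theorem plegma_ramsey (F : Set (Finset ℕ)) (hF : RegularThin F)
    (M : Set ℕ) (hM : M.Infinite) (l p : ℕ) (hp : 1 ≤ p)
    (P : Fin p → Set (Fin l → Finset ℕ))
    (hcover : Plm l (restrict F M) = ⋃ i, P i) :
    ∃ L : Set ℕ, L ⊆ M ∧ L.Infinite ∧ ∃ i₀ : Fin p, Plm l (restrict F L) ⊆ P i₀ := by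
  rcases l.eq_zero_or_pos with rfl | hl
  · have hplm : (finZeroElim : Fin 0 → Finset ℕ) ∈ Plm 0 (restrict F M) :=
      ⟨⟨finZeroElim, finZeroElim, finZeroElim⟩, finZeroElim⟩
    obtain ⟨j, hj⟩ := mem_iUnion.1 (hcover ▸ hplm)
    exact ⟨M, subset_rfl, hM, j, fun s _ => Subsingleton.elim finZeroElim s ▸ hj⟩
  obtain ⟨L₀, hL₀M, hL₀, hlarge | hnone⟩ := exists_veryLarge_or_forall_not_subset F hM
  · by_cases h0 : ∅ ∈ F
    · refine ⟨M, subset_rfl, hM, ⟨0, hp⟩, fun s hs => ?_⟩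
      have hs₀ := hF.1.eq_empty_of_empty_mem h0 (hs.2 ⟨0, hl⟩).1
      exact ((hs.1.1 ⟨0, hl⟩).ne_empty hs₀).elim
    have hcodes : VeryLarge (⋃ j ∈ Finset.univ, {t | ∃ s ∈ P j, Codes l F t s}) L₀ := by
      refine (hlarge.codes hl h0).mono fun t ⟨s, hs, hst⟩ => ?_
      obtain ⟨j, hj⟩ := mem_iUnion.1 (hcover ▸ plm_restrict_mono hL₀M hs)
      exact mem_iUnion₂.2 ⟨j, Finset.mem_univ j, s, hj, hst⟩
    obtain ⟨L₁, hL₁L₀, hL₁, j, -, hj⟩ := hcodes.exists_biUnion hL₀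
    obtain ⟨L, hLL₁, hL, hLj⟩ := hj.exists_plm_subset hl hF.1 hL₁
    exact ⟨L, hLL₁.trans (hL₁L₀.trans hL₀M), hL, j, hLj⟩
  · refine ⟨L₀, hL₀M, hL₀, ⟨0, hp⟩, fun s hs => ?_⟩
    exact absurd (hs.2 ⟨0, hl⟩).2 (hnone _ (hs.2 ⟨0, hl⟩).1)
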